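/- (Correctness of the dynamic program for minimum-length one-sided simplification.) Let A = (a_1,...,a_m), B = (b_1,...,b_n) be chains in a metric space and δ > 0. For 1 ≤ i ≤ m and 1 ≤ j ≤ n, define O[i,j] as the minimum length of a subsequence A^i of A[i..m] beginning at a_i such that d_dF(A^i, B[j..n]) ≤ δ (∞ if none exists), and X[i,j] = min_{i' ≥ i} O[i',j]. Then: (1) O[i,j] = ∞ whenever d(a_i, b_j) > δ; (2) if d(a_i, b_j) ≤ δ and i < m and j < n, then O[i,j] = min( O[i,j+1], X[i+1,j+1] + 1 ); (3) X[i,j] = min( X[i+1,j], O[i,j] ) with X[m+1,j] = ∞. -/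

import Mathlib

/-- One step of a monotone coupling on 0-based index pairs:
each index advances by 0 or 1, and at least one advances. -/
def StepN (p q : ℕ × ℕ) : Prop :=
  p.1 ≤ q.1 ∧ q.1 ≤ p.1 + 1 ∧ p.2 ≤ q.2 ∧ q.2 ≤ p.2 + 1 ∧ p ≠ q

/-- A coupling of sequences of lengths `la` and `lb`: starts at `(0,0)`,
ends at `(la-1, lb-1)`, and advances by `StepN`. -/
def IsCouplingL (la lb : ℕ) (c : List (ℕ × ℕ)) : Prop :=
  c.head? = some (0, 0) ∧ c.getLast? = some (la - 1, lb - 1) ∧ c.Chain' StepN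

/-- The maximal pointwise distance along a coupling. -/
noncomputable def costL {X : Type*} [MetricSpace X] [Inhabited X]
    (P Q : List X) (c : List (ℕ × ℕ)) : ℝ :=
  (c.map (fun p => dist (P.getD p.1 default) (Q.getD p.2 default))).foldr max 0

/-- The discrete Fréchet distance of two finite sequences (lists) of points. -/
noncomputable def dFL {X : Type*} [MetricSpace X] [Inhabited X] (P Q : List X) : ℝ :=
  sInf { r | ∃ c, IsCouplingL P.length Q.length c ∧ costL P Q c = r }

/-- `OVal A B δ i j` (1-based `i`, `j`): the minimum length of a subsequence of
the suffix `A[i..m]` beginning at `a_i` whose discrete Fréchet distance to the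
suffix `B[j..n]` is at most `δ` (and `⊤` if none exists). -/
noncomputable def OVal {X : Type*} [MetricSpace X] [Inhabited X]
    (A B : List X) (δ : ℝ) (i j : ℕ) : ℕ∞ :=
  sInf {z : ℕ∞ | ∃ S : List X,
    S.Sublist (A.drop (i - 1)) ∧ S ≠ [] ∧ S.head? = (A.drop (i - 1)).head? ∧
    dFL S (B.drop (j - 1)) ≤ δ ∧ z = (S.length : ℕ∞)}

/-- `XVal A B δ i j = min_{i' ≥ i} OVal A B δ i' j` (with `i'` ranging over
`i, ..., m`). -/
noncomputable def XVal {X : Type*} [MetricSpace X] [Inhabited X]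
    (A B : List X) (δ : ℝ) (i j : ℕ) : ℕ∞ :=
  (Finset.Icc i A.length).inf (fun i' => OVal A B δ i' j)

/-!
Every coupling starts by pairing `a_i` with `b_j`, which gives (1). For (2), take an admissible
`a_i :: S` and an optimal coupling of it with `b_j :: B[j+1..n]`. The coupling first reaches
`b_{j+1}` at some index `k` of `a_i :: S`, and the rest of it couples the suffix of `a_i :: S`
from `k` with `B[j+1..n]`. If `k = 0` this suffix is `a_i :: S` itself, which is admissible for
`O[i,j+1]`. Otherwise it is a nonempty subsequence of `A[i+1..m]`, which is admissible for
`X[i+1,j+1]`. Conversely, prepending the pair `(a_i, b_j)` to an optimal coupling gives both upper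
bounds. (3) splits off the term `i' = i` of the minimum.
-/

namespace List

variable {α : Type*}

theorem foldr_max_le_iff [LinearOrder α] {b r : α} {l : List α} :
    l.foldr max b ≤ r ↔ b ≤ r ∧ ∀ x ∈ l, x ≤ r := by
  induction l with
  | nil => simp
  | cons a l ih => simp [ih, and_left_comm]

theorem foldr_max_mem_cons [LinearOrder α] (b : α) (l : List α) : l.foldr max b ∈ b :: l := by
  induction l with
  | nil => simp
  | cons a l ih =>
    rw [foldr_cons]
    rcases max_choice a (l.foldr max b) with h | h <;> rw [h]
    · simp
    · simp only [mem_cons] at ih ⊢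
      tauto

theorem getD_eq_or_mem (l : List α) (d : α) (n : ℕ) : l.getD n d = d ∨ l.getD n d ∈ l := by
  rw [getD_eq_getElem?_getD]
  cases h : l[n]? with
  | none => simp
  | some x => exact Or.inr (mem_of_getElem? h)

theorem getD_drop (l : List α) (n k : ℕ) (d : α) : (l.drop n).getD k d = l.getD (n + k) d := by
  simp [getD_eq_getElem?_getD, getElem?_drop]

theorem drop_sub_one_eq_getD_cons {l : List α} {i : ℕ} (d : α) (hi : 1 ≤ i) (hil : i ≤ l.length) :
    l.drop (i - 1) = l.getD (i - 1) d :: l.drop i := by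
  rw [drop_eq_getElem_cons (by omega), getD_eq_getElem _ _ (by omega), Nat.sub_add_cancel hi]

theorem Sublist.exists_drop_head? {S L : List α} (h : S <+ L) (hS : S ≠ []) :
    ∃ p < L.length, S <+ L.drop p ∧ S.head? = (L.drop p).head? := by
  induction h with
  | slnil => exact absurd rfl hS
  | cons a _ ih =>
    obtain ⟨p, hp, hsub, hhead⟩ := ih hS
    exact ⟨p + 1, by simpa using hp, hsub, hhead⟩
  | cons_cons a h => exact ⟨0, by simp, by simpa using h.cons_cons a, rfl⟩

theorem sublist_cons_head?_eq_iff {a : α} {S T : List α} :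
    (S <+ a :: T ∧ S ≠ [] ∧ S.head? = (a :: T).head?) ↔ ∃ S', S' <+ T ∧ S = a :: S' := by
  constructor
  · rintro ⟨hsub, hne, hhead⟩
    obtain ⟨x, S', rfl⟩ := exists_cons_of_ne_nil hne
    obtain rfl : x = a := by simpa using hhead
    exact ⟨S', cons_sublist_cons.1 hsub, rfl⟩
  · rintro ⟨S', hS', rfl⟩
    exact ⟨hS'.cons_cons a, cons_ne_nil _ _, rfl⟩

end List

namespace StepN

theorem le {p q : ℕ × ℕ} (h : StepN p q) : p ≤ q := ⟨h.1, h.2.2.1⟩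

theorem add_right {p q : ℕ × ℕ} (h : StepN p q) (r : ℕ × ℕ) : StepN (p + r) (q + r) := by
  obtain ⟨h1, h2, h3, h4, hne⟩ := h
  refine ⟨by simp [h1], by simp; omega, by simp [h3], by simp; omega, fun he => hne ?_⟩
  simpa using he

theorem sub_right {p q r : ℕ × ℕ} (h : StepN p q) (hr : r ≤ p) : StepN (p - r) (q - r) := by
  obtain ⟨h1, h2, h3, h4, hne⟩ := h
  obtain ⟨hr1, hr2⟩ := hr
  refine ⟨by simp; omega, by simp; omega, by simp; omega, by simp; omega, fun he => hne ?_⟩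
  simp only [Prod.ext_iff, Prod.fst_sub, Prod.snd_sub] at he ⊢
  omega

end StepN

theorem head_le_of_isChain_stepN {q : ℕ × ℕ} {c : List (ℕ × ℕ)} (h : (q :: c).IsChain StepN) :
    ∀ x ∈ q :: c, q ≤ x := by
  have hp := List.isChain_iff_pairwise.1 (h.imp fun _ _ => StepN.le)
  simpa using (List.pairwise_cons.1 hp).1

theorem exists_eq_append_cons_snd_eq_one {x : ℕ × ℕ} {c : List (ℕ × ℕ)}
    (hc : (x :: c).IsChain StepN) (hx : x.2 = 0) (hy : ∃ y ∈ x :: c, y.2 ≠ 0) :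
    ∃ pre q post, x :: c = pre ++ q :: post ∧ q.2 = 1 := by
  induction c generalizing x with
  | nil => simp_all
  | cons z c ih =>
    obtain ⟨hxz, hzc⟩ := List.isChain_cons_cons.1 hc
    by_cases hz : z.2 = 0
    · obtain ⟨pre, q, post, h, hq⟩ := ih hzc hz (by simpa [hx] using hy)
      exact ⟨x :: pre, q, post, by rw [h, List.cons_append], hq⟩
    · exact ⟨[x], z, c, rfl, by have := hxz.2.2.2.1; omega⟩

namespace IsCouplingL

theorem append {la lb : ℕ} {c : List (ℕ × ℕ)} {q : ℕ × ℕ} (hc : IsCouplingL la lb c)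
    (hq : StepN (la - 1, lb - 1) q) : IsCouplingL (q.1 + 1) (q.2 + 1) (c ++ [q]) := by
  obtain ⟨hh, hl, hch⟩ := hc
  have hne : c ≠ [] := by rintro rfl; simp at hh
  refine ⟨by rwa [List.head?_append_of_ne_nil _ hne], by simp, ?_⟩
  exact List.isChain_append.2 ⟨hch, List.isChain_singleton _, by simp [hl, hq]⟩

theorem cons_map_add {la lb : ℕ} {c : List (ℕ × ℕ)} {s : ℕ × ℕ} (hc : IsCouplingL la lb c)
    (hs : StepN (0, 0) s) (hla : 1 ≤ la) (hlb : 1 ≤ lb) :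
    IsCouplingL (la + s.1) (lb + s.2) ((0, 0) :: c.map (· + s)) := by
  obtain ⟨hh, hl, hch⟩ := hc
  have hne : c ≠ [] := by rintro rfl; simp at hh
  refine ⟨rfl, ?_, ?_⟩
  · rw [List.getLast?_cons, List.getLast?_map, hl]
    simp only [Option.map_some, Option.getD_some, Option.some.injEq, Prod.ext_iff, Prod.fst_add,
      Prod.snd_add]
    omega
  · refine List.isChain_cons.2 ⟨by simpa [List.head?_map, hh, Prod.mk_zero_zero] using hs, ?_⟩
    exact (List.isChain_map _).2 (hch.imp fun _ _ h => h.add_right s)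

end IsCouplingL

theorem isCouplingL_map_sub {q e : ℕ × ℕ} {c : List (ℕ × ℕ)} (hc : (q :: c).IsChain StepN)
    (he : (q :: c).getLast? = some e) :
    IsCouplingL (e.1 - q.1 + 1) (e.2 - q.2 + 1) ((q :: c).map (· - q)) := by
  have hle := head_le_of_isChain_stepN hc
  refine ⟨by simp; rfl, by rw [List.getLast?_map, he]; rfl, ?_⟩
  exact (List.isChain_map _).2 (hc.imp_of_mem_imp fun a _ ha _ h => h.sub_right (hle a ha))

-- The endpoint `(la - 1, lb - 1)` is truncated, so couplings exist even when `la` or `lb` is `0`.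
theorem exists_isCouplingL (la lb : ℕ) : ∃ c, IsCouplingL la lb c := by
  suffices h : ∀ a b, ∃ c, IsCouplingL (a + 1) (b + 1) c by
    simpa [IsCouplingL] using h (la - 1) (lb - 1)
  intro a b
  induction a with
  | zero =>
    induction b with
    | zero => exact ⟨[(0, 0)], rfl, rfl, List.isChain_singleton _⟩
    | succ b ih =>
      obtain ⟨c, hc⟩ := ih
      exact ⟨_, hc.append (q := (0, b + 1)) (by simp [StepN])⟩
  | succ a ih =>
    obtain ⟨c, hc⟩ := ih
    exact ⟨_, hc.append (q := (a + 1, b)) (by simp [StepN])⟩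

section Frechet

variable {X : Type*} [MetricSpace X] [Inhabited X]

theorem costL_cons (P Q : List X) (p : ℕ × ℕ) (c : List (ℕ × ℕ)) :
    costL P Q (p :: c) = max (dist (P.getD p.1 default) (Q.getD p.2 default)) (costL P Q c) :=
  rfl

theorem costL_le_iff {P Q : List X} {c : List (ℕ × ℕ)} {r : ℝ} :
    costL P Q c ≤ r ↔ 0 ≤ r ∧ ∀ p ∈ c, dist (P.getD p.1 default) (Q.getD p.2 default) ≤ r := by
  rw [costL, List.foldr_max_le_iff, List.forall_mem_map]

theorem costL_nonneg (P Q : List X) (c : List (ℕ × ℕ)) : 0 ≤ costL P Q c :=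
  (costL_le_iff.1 le_rfl).1

theorem dist_le_costL {P Q : List X} {c : List (ℕ × ℕ)} {p : ℕ × ℕ} (h : p ∈ c) :
    dist (P.getD p.1 default) (Q.getD p.2 default) ≤ costL P Q c :=
  (costL_le_iff.1 le_rfl).2 p h

theorem costL_mono {P Q : List X} {c₁ c₂ : List (ℕ × ℕ)} (h : c₁ ⊆ c₂) :
    costL P Q c₁ ≤ costL P Q c₂ :=
  costL_le_iff.2 ⟨costL_nonneg P Q c₂, fun _ hp => dist_le_costL (h hp)⟩

theorem costL_map {P Q P' Q' : List X} {c : List (ℕ × ℕ)} {f : ℕ × ℕ → ℕ × ℕ}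
    (h : ∀ p ∈ c, dist (P'.getD (f p).1 default) (Q'.getD (f p).2 default) =
      dist (P.getD p.1 default) (Q.getD p.2 default)) :
    costL P' Q' (c.map f) = costL P Q c := by
  simp only [costL, List.map_map]
  exact congrArg (List.foldr max 0) (List.map_congr_left h)

theorem finite_range_costL (P Q : List X) : (Set.range (costL P Q)).Finite := by
  refine (((P.finite_toSet.insert default).image2 dist
    (Q.finite_toSet.insert default)).insert 0).subset ?_
  rintro _ ⟨c, rfl⟩
  rcases List.mem_cons.1 (List.foldr_max_mem_cons 0 (c.map fun p =>
    dist (P.getD p.1 default) (Q.getD p.2 default))) with h | h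
  · exact Or.inl h
  · obtain ⟨p, -, hp⟩ := List.mem_map.1 h
    exact Or.inr ⟨_, P.getD_eq_or_mem _ p.1, _, Q.getD_eq_or_mem _ p.2, hp⟩

theorem dFL_le_costL {P Q : List X} {c : List (ℕ × ℕ)} (h : IsCouplingL P.length Q.length c) :
    dFL P Q ≤ costL P Q c :=
  csInf_le ⟨0, fun _ ⟨c, _, h⟩ => h ▸ costL_nonneg P Q c⟩ ⟨c, h, rfl⟩

theorem exists_costL_eq_dFL (P Q : List X) :
    ∃ c, IsCouplingL P.length Q.length c ∧ costL P Q c = dFL P Q := by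
  obtain ⟨c, hc⟩ := exists_isCouplingL P.length Q.length
  have hne : Set.Nonempty {r | ∃ c, IsCouplingL P.length Q.length c ∧ costL P Q c = r} :=
    ⟨_, c, hc, rfl⟩
  exact hne.csInf_mem ((finite_range_costL P Q).subset fun _ ⟨c, _, h⟩ => ⟨c, h⟩)

theorem dist_le_dFL_cons (p q : X) (P Q : List X) : dist p q ≤ dFL (p :: P) (q :: Q) := by
  obtain ⟨c, hc, hcost⟩ := exists_costL_eq_dFL (p :: P) (q :: Q)
  simpa [hcost] using dist_le_costL (P := p :: P) (Q := q :: Q) (List.mem_of_mem_head? hc.1)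

theorem dFL_le_max_dist_dFL_drop {P Q : List X} {s : ℕ × ℕ} (hs : StepN (0, 0) s)
    (hP : s.1 < P.length) (hQ : s.2 < Q.length) :
    dFL P Q ≤ max (dist (P.getD 0 default) (Q.getD 0 default)) (dFL (P.drop s.1) (Q.drop s.2)) := by
  obtain ⟨c, hc, hcost⟩ := exists_costL_eq_dFL (P.drop s.1) (Q.drop s.2)
  have hc' := hc.cons_map_add hs (by simp; omega) (by simp; omega)
  rw [List.length_drop, List.length_drop, Nat.sub_add_cancel hP.le, Nat.sub_add_cancel hQ.le] at hc'
  refine (dFL_le_costL hc').trans_eq ?_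
  rw [costL_cons, costL_map fun p _ => ?_, hcost]
  rw [List.getD_drop, List.getD_drop, Prod.fst_add, Prod.snd_add, add_comm p.1, add_comm p.2]

theorem dFL_cons_cons_le (p q : X) {P Q : List X} (hP : P ≠ []) (hQ : Q ≠ []) :
    dFL (p :: P) (q :: Q) ≤ max (dist p q) (dFL P Q) := by
  simpa using dFL_le_max_dist_dFL_drop (P := p :: P) (Q := q :: Q) (s := (1, 1))
    (by simp [StepN])
    (by simpa using List.length_pos_iff.2 hP) (by simpa using List.length_pos_iff.2 hQ)

theorem dFL_cons_cons_le_right (p q : X) (P : List X) {Q : List X} (hQ : Q ≠ []) :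
    dFL (p :: P) (q :: Q) ≤ max (dist p q) (dFL (p :: P) Q) := by
  simpa using dFL_le_max_dist_dFL_drop (P := p :: P) (Q := q :: Q) (s := (0, 1))
    (by simp [StepN])
    (by simp) (by simpa using List.length_pos_iff.2 hQ)

/-- An optimal coupling of `P` with `b :: Q` first reaches `Q` at some pair `(k, 1)`; from there on
it couples `P.drop k` with `Q`. -/
theorem exists_dFL_drop_le_dFL_cons {P Q : List X} (b : X) (hP : P ≠ []) (hQ : Q ≠ []) :
    ∃ k < P.length, dFL (P.drop k) Q ≤ dFL P (b :: Q) := by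
  obtain ⟨c, ⟨hh, hl, hch⟩, hcost⟩ := exists_costL_eq_dFL P (b :: Q)
  obtain ⟨c, rfl⟩ : ∃ c', c = (0, 0) :: c' := by
    cases c with
    | nil => simp at hh
    | cons x c => exact ⟨c, by simpa using hh⟩
  have hQpos := List.length_pos_iff.2 hQ
  obtain ⟨pre, q, post, hsplit, hq⟩ := exists_eq_append_cons_snd_eq_one hch rfl
    ⟨_, List.mem_of_getLast? hl, by simp; omega⟩
  have hsuf : (q :: post).IsChain StepN := hch.suffix (hsplit ▸ List.suffix_append _ _)
  have hlast : (q :: post).getLast? = some (P.length - 1, Q.length) := by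
    rw [hsplit, List.getLast?_append_cons] at hl
    simpa using hl
  have hle := head_le_of_isChain_stepN hsuf
  obtain ⟨hq1, -⟩ := hle _ (List.mem_of_getLast? hlast)
  have hPpos := List.length_pos_iff.2 hP
  refine ⟨q.1, by simp at hq1; omega, ?_⟩
  have hc' := isCouplingL_map_sub hsuf hlast
  rw [show P.length - 1 - q.1 + 1 = (P.drop q.1).length by simp; omega,
    show Q.length - q.2 + 1 = Q.length by omega] at hc'
  calc dFL (P.drop q.1) Q ≤ costL (P.drop q.1) Q ((q :: post).map (· - q)) := dFL_le_costL hc'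
    _ = costL P (b :: Q) (q :: post) := costL_map fun p hp => ?_
    _ ≤ costL P (b :: Q) ((0, 0) :: c) :=
        costL_mono (by rw [hsplit]; exact List.subset_append_right _ _)
    _ = dFL P (b :: Q) := hcost
  obtain ⟨h1, h2⟩ := hle p hp
  obtain ⟨k, hk⟩ : ∃ k, p.2 = k + 1 := ⟨p.2 - 1, by omega⟩
  rw [List.getD_drop, Prod.fst_sub, Prod.snd_sub, hq, hk, Nat.add_sub_cancel, List.getD_cons_succ,
    Nat.add_sub_of_le h1]

end Frechet

section DynamicProgram

variable {X : Type*} [MetricSpace X] [Inhabited X] {A B : List X} {δ : ℝ} {i j : ℕ}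

theorem OVal_le (hi : 1 ≤ i) (hiA : i ≤ A.length) {S : List X} (hS : S.Sublist (A.drop i))
    (hd : dFL (A.getD (i - 1) default :: S) (B.drop (j - 1)) ≤ δ) :
    OVal A B δ i j ≤ S.length + 1 := by
  have hA := A.drop_sub_one_eq_getD_cons default hi hiA
  exact sInf_le ⟨_, hA ▸ hS.cons_cons _, List.cons_ne_nil _ _, by rw [hA]; rfl, hd, by simp⟩

theorem le_OVal (hi : 1 ≤ i) (hiA : i ≤ A.length) {v : ℕ∞}
    (h : ∀ S, S.Sublist (A.drop i) → dFL (A.getD (i - 1) default :: S) (B.drop (j - 1)) ≤ δ →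
      v ≤ S.length + 1) :
    v ≤ OVal A B δ i j := by
  refine le_sInf fun _ ⟨S, hsub, hne, hhead, hd, hz⟩ => ?_
  rw [A.drop_sub_one_eq_getD_cons default hi hiA] at hsub hhead
  obtain ⟨S, hS, rfl⟩ := List.sublist_cons_head?_eq_iff.1 ⟨hsub, hne, hhead⟩
  simpa [hz] using h S hS hd

theorem exists_of_OVal_ne_top (h : OVal A B δ i j ≠ ⊤) :
    ∃ S, S.Sublist (A.drop (i - 1)) ∧ S ≠ [] ∧ dFL S (B.drop (j - 1)) ≤ δ ∧
      OVal A B δ i j = S.length := by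
  unfold OVal at h ⊢
  obtain ⟨z, hz, -⟩ := not_forall₂.1 (mt sInf_eq_top.2 h)
  obtain ⟨S, hsub, hS, -, hd, hO⟩ := csInf_mem ⟨z, hz⟩
  exact ⟨S, hsub, hS, hd, hO⟩

theorem XVal_le (hi : 1 ≤ i) {S : List X} (hne : S ≠ []) (hS : S.Sublist (A.drop (i - 1)))
    (hd : dFL S (B.drop (j - 1)) ≤ δ) : XVal A B δ i j ≤ S.length := by
  obtain ⟨p, hp, hsub, hhead⟩ := hS.exists_drop_head? hne
  rw [List.drop_drop] at hsub hhead
  have hmem : i + p ∈ Finset.Icc i A.length := by simp at hp ⊢; omega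
  have hp' : i + p - 1 = i - 1 + p := by omega
  exact (Finset.inf_le hmem).trans (sInf_le ⟨S, hp' ▸ hsub, hne, hp' ▸ hhead, hd, rfl⟩)

theorem exists_of_XVal_ne_top (h : XVal A B δ i j ≠ ⊤) :
    ∃ S, S.Sublist (A.drop (i - 1)) ∧ S ≠ [] ∧ dFL S (B.drop (j - 1)) ≤ δ ∧
      XVal A B δ i j = S.length := by
  have hne : (Finset.Icc i A.length).Nonempty :=
    Finset.nonempty_iff_ne_empty.2 fun he => h (by simp [XVal, he])
  obtain ⟨i', hi', hX⟩ := Finset.exists_mem_eq_inf _ hne fun i' => OVal A B δ i' j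
  rw [XVal, hX] at h ⊢
  obtain ⟨S, hsub, hS, hd, hO⟩ := exists_of_OVal_ne_top h
  exact ⟨S, hsub.trans (A.drop_sublist_drop_left (by simp at hi'; omega)), hS, hd, hO⟩

theorem OVal_eq_top_of_lt_dist (hi : 1 ≤ i) (hiA : i ≤ A.length) (hj : 1 ≤ j)
    (hjB : j ≤ B.length) (hd : δ < dist (A.getD (i - 1) default) (B.getD (j - 1) default)) :
    OVal A B δ i j = ⊤ := by
  refine top_le_iff.1 (le_OVal hi hiA fun S _ hS => ?_)
  rw [B.drop_sub_one_eq_getD_cons default hj hjB] at hS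
  exact absurd ((dist_le_dFL_cons _ _ _ _).trans hS) hd.not_ge

theorem OVal_le_OVal_succ_right (hi : 1 ≤ i) (hiA : i ≤ A.length) (hj : 1 ≤ j)
    (hjB : j < B.length) (hd : dist (A.getD (i - 1) default) (B.getD (j - 1) default) ≤ δ) :
    OVal A B δ i j ≤ OVal A B δ i (j + 1) := by
  have hBj : B.drop j ≠ [] := by simpa [List.drop_eq_nil_iff] using hjB
  refine le_OVal hi hiA fun S hS hSd => OVal_le hi hiA hS ?_
  rw [Nat.add_sub_cancel] at hSd
  rw [B.drop_sub_one_eq_getD_cons default hj hjB.le]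
  exact (dFL_cons_cons_le_right _ _ _ hBj).trans (max_le hd hSd)

theorem OVal_le_XVal_succ_add_one (hi : 1 ≤ i) (hiA : i ≤ A.length) (hj : 1 ≤ j)
    (hjB : j < B.length) (hd : dist (A.getD (i - 1) default) (B.getD (j - 1) default) ≤ δ) :
    OVal A B δ i j ≤ XVal A B δ (i + 1) (j + 1) + 1 := by
  have hBj : B.drop j ≠ [] := by simpa [List.drop_eq_nil_iff] using hjB
  by_cases hX : XVal A B δ (i + 1) (j + 1) = ⊤
  · simp [hX]
  obtain ⟨S, hsub, hne, hSd, hXS⟩ := exists_of_XVal_ne_top hX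
  rw [Nat.add_sub_cancel] at hsub hSd
  rw [hXS]
  refine OVal_le hi hiA hsub ?_
  rw [B.drop_sub_one_eq_getD_cons default hj hjB.le]
  exact (dFL_cons_cons_le _ _ hne hBj).trans (max_le hd hSd)

theorem min_le_OVal (hi : 1 ≤ i) (hiA : i ≤ A.length) (hj : 1 ≤ j) (hjB : j < B.length) :
    min (OVal A B δ i (j + 1)) (XVal A B δ (i + 1) (j + 1) + 1) ≤ OVal A B δ i j := by
  have hBj : B.drop j ≠ [] := by simpa [List.drop_eq_nil_iff] using hjB
  refine le_OVal hi hiA fun S hS hSd => ?_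
  rw [B.drop_sub_one_eq_getD_cons default hj hjB.le] at hSd
  obtain ⟨k, hk, hkd⟩ := exists_dFL_drop_le_dFL_cons (B.getD (j - 1) default)
    (List.cons_ne_nil (A.getD (i - 1) default) S) hBj
  replace hkd := hkd.trans hSd
  cases k with
  | zero =>
    refine min_le_of_left_le (OVal_le hi hiA hS ?_)
    rwa [Nat.add_sub_cancel]
  | succ k =>
    refine min_le_of_right_le ?_
    rw [List.drop_succ_cons] at hkd
    have hne : S.drop k ≠ [] := by
      rw [List.length_cons] at hk
      simpa [List.drop_eq_nil_iff] using hk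
    have hX : XVal A B δ (i + 1) (j + 1) ≤ (S.drop k).length :=
      XVal_le (by omega) hne ((List.drop_sublist k S).trans hS) hkd
    calc XVal A B δ (i + 1) (j + 1) + 1 ≤ (S.drop k).length + 1 := by gcongr
      _ ≤ S.length + 1 := by gcongr; simp

theorem XVal_eq_min (hiA : i ≤ A.length) :
    XVal A B δ i j = min (XVal A B δ (i + 1) j) (OVal A B δ i j) := by
  rw [XVal, XVal, ← Finset.insert_Icc_add_one_left_eq_Icc hiA, Finset.inf_insert, min_comm]

end DynamicProgram

theorem one_sided_dp_correct_general {X : Type*} [MetricSpace X] [Inhabited X]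
    (A B : List X) (δ : ℝ) :
    (∀ i j, 1 ≤ i → i ≤ A.length → 1 ≤ j → j ≤ B.length →
      δ < dist (A.getD (i - 1) default) (B.getD (j - 1) default) →
      OVal A B δ i j = ⊤) ∧
    (∀ i j, 1 ≤ i → i < A.length → 1 ≤ j → j < B.length →
      dist (A.getD (i - 1) default) (B.getD (j - 1) default) ≤ δ →
      OVal A B δ i j = min (OVal A B δ i (j + 1)) (XVal A B δ (i + 1) (j + 1) + 1)) ∧
    (∀ i j, 1 ≤ i → i ≤ A.length → 1 ≤ j → j ≤ B.length →
      XVal A B δ i j = min (XVal A B δ (i + 1) j) (OVal A B δ i j)) :=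
  ⟨fun _ _ hi hiA hj hjB hd => OVal_eq_top_of_lt_dist hi hiA hj hjB hd,
    fun _ _ hi hiA hj hjB hd => le_antisymm
      (le_min (OVal_le_OVal_succ_right hi hiA.le hj hjB hd)
        (OVal_le_XVal_succ_add_one hi hiA.le hj hjB hd))
      (min_le_OVal hi hiA.le hj hjB),
    fun _ _ _ hiA _ _ => XVal_eq_min hiA⟩

/-- Correctness of the dynamic program for minimum-length one-sided
simplification: (1) `O[i,j] = ⊤` when `d(a_i,b_j) > δ`; (2) for interior
`(i,j)` with `d(a_i,b_j) ≤ δ`, `O[i,j] = min(O[i,j+1], X[i+1,j+1] + 1)`;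
(3) `X[i,j] = min(X[i+1,j], O[i,j])`. -/
theorem one_sided_dp_correct {X : Type*} [MetricSpace X] [Inhabited X]
    (A B : List X) (hA : A ≠ []) (hB : B ≠ []) (δ : ℝ) (hδ : 0 < δ) :
    (∀ i j, 1 ≤ i → i ≤ A.length → 1 ≤ j → j ≤ B.length →
      δ < dist (A.getD (i - 1) default) (B.getD (j - 1) default) →
      OVal A B δ i j = ⊤) ∧
    (∀ i j, 1 ≤ i → i < A.length → 1 ≤ j → j < B.length →
      dist (A.getD (i - 1) default) (B.getD (j - 1) default) ≤ δ →
      OVal A B δ i j = min (OVal A B δ i (j + 1)) (XVal A B δ (i + 1) (j + 1) + 1)) ∧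
    (∀ i j, 1 ≤ i → i ≤ A.length → 1 ≤ j → j ≤ B.length →
      XVal A B δ i j = min (XVal A B δ (i + 1) j) (OVal A B δ i j)) :=
  one_sided_dp_correct_general A B δ
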